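/- arXiv:0910.2318 — 2 statements merged into one kernel-verified Lean document; each statement's English description precedes it below -/
import Mathlib

section
/- Let X be a Polish space and let I be a σ-ideal on X generated by closed sets. If G ⊆ X is a Gδ set, then G is I-perfect if and only if the closure of G is I-perfect. -/
open Set

/-- A σ-ideal: closed under subsets and countable unions. -/
def SigmaIdeal {X : Type*} (I : Set (Set X)) : Prop :=
  (∀ A B : Set X, A ⊆ B → B ∈ I → A ∈ I) ∧
  ∀ f : ℕ → Set X, (∀ n, f n ∈ I) → (⋃ n, f n) ∈ I

/-- `I` is generated by closed sets: every member of `I` is contained in a countable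
union of closed sets belonging to `I`. -/
def GeneratedByClosedSets {X : Type*} [TopologicalSpace X] (I : Set (Set X)) : Prop :=
  ∀ A ∈ I, ∃ f : ℕ → Set X, (∀ n, IsClosed (f n) ∧ f n ∈ I) ∧ A ⊆ ⋃ n, f n

/-- `A` is `I`-perfect: nonempty, and for every open `U` the set `A ∩ U` is empty or
`I`-positive. -/
def IdealPerfect {X : Type*} [TopologicalSpace X] (I : Set (Set X)) (A : Set X) : Prop :=
  A.Nonempty ∧ ∀ U : Set X, IsOpen U → A ∩ U = ∅ ∨ A ∩ U ∉ I

/-!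
If `G ∩ U` were a nonempty member of `I`, it would be covered by countably many closed sets
`F n ∈ I`. Since `G ∩ U` is a dense `Gδ` subset of the Polish space `closure (G ∩ U)`, Baire's
theorem yields an `F n` containing a piece `closure G ∩ U ∩ V` (`V` open) that meets `G`; this
nonempty relatively open piece of `closure G` then lies in `I`. The other implication is immediate
from `G ∩ U ⊆ closure G ∩ U`.
-/

lemma dense_preimage_val_closure {X : Type*} [TopologicalSpace X] (A : Set X) :
    Dense (((↑) : closure A → X) ⁻¹' A) := by
  rw [Subtype.dense_iff, image_preimage_eq_inter_range, Subtype.range_coe,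
    inter_eq_left.mpr subset_closure]

lemma IsGδ.exists_isOpen_closure_inter_subset_of_subset_iUnion {X ι : Type*}
    [TopologicalSpace X] [Countable ι] {A : Set X} [BaireSpace (closure A)] (hA : IsGδ A)
    (hne : A.Nonempty) {F : ι → Set X} (hF : ∀ i, IsClosed (F i)) (hAF : A ⊆ ⋃ i, F i) :
    ∃ i V, IsOpen V ∧ (A ∩ V).Nonempty ∧ closure A ∩ V ⊆ F i := by
  have : Nonempty (closure A) := ⟨⟨hne.some, subset_closure hne.some_mem⟩⟩
  obtain ⟨y, hy⟩ := ((hA.preimage continuous_subtype_val).dense_iUnion_interior_of_closed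
    (dense_preimage_val_closure A) (fun i => (hF i).preimage continuous_subtype_val)
    (by rw [← preimage_iUnion]; exact preimage_mono hAF)).nonempty
  obtain ⟨i, hyi⟩ := mem_iUnion.mp hy
  obtain ⟨V, hV, hVi⟩ := isOpen_induced_iff.mp
    (isOpen_interior (s := ((↑) : closure A → X) ⁻¹' F i))
  have hyV : (y : X) ∈ V := by rw [← mem_preimage, hVi]; exact hyi
  refine ⟨i, V, hV, (closure_inter_open_nonempty_iff hV).mp ⟨y, y.2, hyV⟩, ?_⟩
  rintro x ⟨hxA, hxV⟩
  have hx : (⟨x, hxA⟩ : closure A) ∈ interior ((↑) ⁻¹' F i) := by rw [← hVi]; exact hxV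
  exact interior_subset (s := ((↑) : closure A → X) ⁻¹' F i) hx

theorem idealPerfect_closure {X : Type*} [TopologicalSpace X] {I : Set (Set X)}
    (hI : ∀ A B : Set X, A ⊆ B → B ∈ I → A ∈ I) {G : Set X} (hG : IdealPerfect I G) :
    IdealPerfect I (closure G) := by
  refine ⟨hG.1.mono subset_closure, fun U hU => ?_⟩
  rcases eq_empty_or_nonempty (closure G ∩ U) with hempty | hne
  · exact .inl hempty
  · have hGU : G ∩ U ∉ I :=
      (hG.2 U hU).resolve_left ((closure_inter_open_nonempty_iff hU).mp hne).ne_empty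
    exact .inr fun hmem => hGU (hI _ _ (inter_subset_inter_left U subset_closure) hmem)

theorem idealPerfect_of_idealPerfect_closure {X : Type*} [TopologicalSpace X] [PolishSpace X]
    {I : Set (Set X)} (hI : ∀ A B : Set X, A ⊆ B → B ∈ I → A ∈ I)
    (hgen : GeneratedByClosedSets I) {G : Set X} (hG : IsGδ G)
    (h : IdealPerfect I (closure G)) : IdealPerfect I G := by
  refine ⟨closure_nonempty_iff.mp h.1, fun U hU => ?_⟩
  rcases eq_empty_or_nonempty (G ∩ U) with hempty | hne
  · exact .inl hempty
  refine .inr fun hmem => ?_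
  obtain ⟨F, hF, hcover⟩ := hgen _ hmem
  have : PolishSpace (closure (G ∩ U)) := isClosed_closure.polishSpace
  obtain ⟨n, V, hV, hmeets, hsub⟩ :=
    (hG.inter hU.isGδ).exists_isOpen_closure_inter_subset_of_subset_iUnion hne
      (fun n => (hF n).1) hcover
  have hsmall : closure G ∩ (U ∩ V) ∈ I :=
    hI _ _ (fun x hx => hsub ⟨hU.closure_inter ⟨hx.1, hx.2.1⟩, hx.2.2⟩) (hF n).2
  have hnonempty : (closure G ∩ (U ∩ V)).Nonempty := by
    obtain ⟨x, ⟨hxG, hxU⟩, hxV⟩ := hmeets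
    exact ⟨x, subset_closure hxG, hxU, hxV⟩
  exact ((h.2 _ (hU.inter hV)).resolve_left hnonempty.ne_empty) hsmall

theorem gdelta_perfect_iff_closure_perfect
    {X : Type*} [TopologicalSpace X] [PolishSpace X]
    (I : Set (Set X)) (hI : SigmaIdeal I) (hgen : GeneratedByClosedSets I)
    (G : Set X) (hG : IsGδ G) :
    IdealPerfect I G ↔ IdealPerfect I (closure G) :=
  ⟨idealPerfect_closure hI.1, idealPerfect_of_idealPerfect_closure hI.1 hgen hG⟩
end

section
/- Let X and Y be Polish spaces and let f : Y → X be a continuous open surjection. If U ⊆ Y is open and dense, then the set {x ∈ X : U ∩ f⁻¹({x}) is dense in the subspace f⁻¹({x})} is comeager in X. -/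
/-!
Fix a countable basis `B` of `Y`. If `U ∩ f⁻¹{x}` is not dense in the fibre, some `V ∈ B` meets
the fibre but misses `U` on it, so `x ∈ f '' V \ f '' (V ∩ U)`. Since `U` is dense and `f` is
continuous, `f '' V ⊆ closure (f '' (V ∩ U))`, and `f '' (V ∩ U)` is open, so each of these
countably many sets lies in the frontier of an open set and is nowhere dense.
-/

open Set Topology TopologicalSpace

theorem IsOpen.isNowhereDense_frontier {X : Type*} [TopologicalSpace X] {t : Set X}
    (ht : IsOpen t) : IsNowhereDense (frontier t) := by
  rw [IsNowhereDense, isClosed_frontier.closure_eq, ← frontier_compl]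
  exact interior_frontier ht.isClosed_compl

theorem IsOpen.isNowhereDense_diff_of_subset_closure {X : Type*} [TopologicalSpace X]
    {s t : Set X} (ht : IsOpen t) (hst : s ⊆ closure t) : IsNowhereDense (s \ t) :=
  ht.isNowhereDense_frontier.mono fun _ hx ↦ by
    rw [frontier, ht.interior_eq]
    exact ⟨hst hx.1, hx.2⟩

theorem isNowhereDense_image_diff_image_inter {X Y : Type*} [TopologicalSpace X]
    [TopologicalSpace Y] {f : Y → X} (hf : Continuous f) (hopen : IsOpenMap f) {U V : Set Y}
    (hU : IsOpen U) (hdense : Dense U) (hV : IsOpen V) :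
    IsNowhereDense (f '' V \ f '' (V ∩ U)) := by
  refine (hopen _ (hV.inter hU)).isNowhereDense_diff_of_subset_closure ?_
  calc f '' V ⊆ f '' closure (V ∩ U) := image_mono (hdense.open_subset_closure_inter hV)
    _ ⊆ closure (f '' (V ∩ U)) := image_closure_subset_closure_image hf

theorem setOf_not_dense_fiber_subset_biUnion {X Y : Type*} [TopologicalSpace Y]
    {B : Set (Set Y)} (hB : IsTopologicalBasis B) (f : Y → X) (U : Set Y) :
    {x : X | ¬ Dense (Subtype.val ⁻¹' U : Set (f ⁻¹' {x}))} ⊆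
      ⋃ V ∈ B, f '' V \ f '' (V ∩ U) := by
  intro x hx
  contrapose! hx
  simp only [mem_iUnion, mem_sdiff, not_exists, not_and, not_not] at hx
  rw [mem_ofPred_eq, not_not, (hB.isInducing IsInducing.subtypeVal).dense_iff]
  rintro _ ⟨V, hV, rfl⟩ ⟨⟨y, hy⟩, hyV⟩
  obtain ⟨z, ⟨hzV, hzU⟩, hzx⟩ := hx V hV ⟨y, hyV, hy⟩
  exact ⟨⟨z, hzx⟩, hzV, hzU⟩

theorem dense_open_fiberwise_dense_comeager_general
    {X Y : Type*} [TopologicalSpace X]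
    [TopologicalSpace Y] [PolishSpace Y]
    (f : Y → X) (hf : Continuous f) (hopen : IsOpenMap f)
    (U : Set Y) (hU : IsOpen U) (hdense : Dense U) :
    IsMeagre {x : X | ¬ Dense (Subtype.val ⁻¹' U : Set (f ⁻¹' {x}))} := by
  obtain ⟨B, hBc, -, hB⟩ := exists_countable_basis Y
  refine (isMeagre_biUnion hBc fun V hV ↦ ?_).mono (setOf_not_dense_fiber_subset_biUnion hB f U)
  exact (isNowhereDense_image_diff_image_inter hf hopen hU hdense (hB.isOpen hV)).isMeagre

theorem dense_open_fiberwise_dense_comeager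
    {X Y : Type*} [TopologicalSpace X] [PolishSpace X]
    [TopologicalSpace Y] [PolishSpace Y]
    (f : Y → X) (hf : Continuous f) (hopen : IsOpenMap f) (hsurj : Function.Surjective f)
    (U : Set Y) (hU : IsOpen U) (hdense : Dense U) :
    IsMeagre {x : X | ¬ Dense (Subtype.val ⁻¹' U : Set (f ⁻¹' {x}))} :=
  dense_open_fiberwise_dense_comeager_general f hf hopen U hU hdense
end
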